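/- Let k ≥ 1 be an integer and let m be a positive integer divisible by p² for some prime p not dividing k(k+1). Then z_k(m) ≤ 2m/3; if moreover k ≢ 1 (mod 9) and k ≢ 7 (mod 9), then z_k(m) ≤ 3m/5. If in addition m is even, then z_k(m) ≤ 3m/5, and if m is even and k ≡ 0, 2 or 4 (mod 5), then z_k(m) ≤ 7m/13. -/

import Mathlib

/-- The Shallit sequence `U(k)`: `U₀ = 0`, `U₁ = 1`,
`U_{n+2} = (4k+2) U_{n+1} - U_n`. -/
def shallitU (k : ℕ) : ℕ → ℤ
  | 0 => 0
  | 1 => 1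
  | n + 2 => (4 * (k : ℤ) + 2) * shallitU k (n + 1) - shallitU k n

/-- `U₀(k), …, U_{n-1}(k)` are pairwise incongruent modulo `m`. -/
def Discriminates (k m n : ℕ) : Prop :=
  ∀ i j : ℕ, i < n → j < n → shallitU k i ≡ shallitU k j [ZMOD (m : ℤ)] → i = j

/-- The discriminator `D_k(n)`: the smallest positive integer `m` such that
`U₀(k), …, U_{n-1}(k)` are pairwise incongruent modulo `m`. -/
noncomputable def shallitD (k n : ℕ) : ℕ :=
  sInf {m : ℕ | 0 < m ∧ Discriminates k m n}

/-- The index of appearance `z_k(m)`: the smallest `n ≥ 1` with `m ∣ U_n(k)`. -/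
noncomputable def shallitZ (k m : ℕ) : ℕ :=
  sInf {n : ℕ | 0 < n ∧ (m : ℤ) ∣ shallitU k n}

/-- The incongruence index `ι_k(m)`: the largest `j` such that
`U₀(k), …, U_{j-1}(k)` are pairwise distinct modulo `m`. -/
noncomputable def shallitIota (k m : ℕ) : ℕ :=
  sSup {j : ℕ | Discriminates k m j}

/-- `P(N)`: positive integers all of whose prime divisors divide `N`. -/
def setP (N : ℕ) : Set ℕ :=
  {m | 0 < m ∧ ∀ p : ℕ, p.Prime → p ∣ m → p ∣ N}

/-- The set `A_k`. -/
def setA (k : ℕ) : Set ℕ :=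
  {m | 0 < m ∧ Odd m ∧ (∀ p : ℕ, p.Prime → p ∣ m → p ∣ k) ∧
    (k % 9 = 6 → ¬ (9 ∣ m))}

/-- The set `B_k`. -/
def setB (k : ℕ) : Set ℕ :=
  {m | 0 < m ∧ Even m ∧ (∀ p : ℕ, p.Prime → p ∣ m → p ∣ k * (k + 1)) ∧
    ((k % 9 = 2 ∨ k % 9 = 6) → ¬ (9 ∣ m))}

/-- The set `S_{k,n} = {m ∈ A_k ∪ B_k : m ≥ n}`. -/
def setS (k n : ℕ) : Set ℕ :=
  {m | m ∈ setA k ∪ setB k ∧ n ≤ m}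

/-- The set `A_{5,k} = {a·5^b : a ∈ A_k, b ≥ 1}`. -/
def setA5 (k : ℕ) : Set ℕ :=
  {m | ∃ a b : ℕ, a ∈ setA k ∧ 1 ≤ b ∧ m = a * 5 ^ b}

/-- The set `B_{5,k} = {a·5^b : a ∈ B_k, b ≥ 1}`. -/
def setB5 (k : ℕ) : Set ℕ :=
  {m | ∃ a b : ℕ, a ∈ setB k ∧ 1 ≤ b ∧ m = a * 5 ^ b}

/-! Write `m = p ^ e * m'` with `e ≥ 2` and `p ∤ m'`. Since `(U_n)` is a divisibility sequence,
`z(m) ≤ lcm N g` whenever `m' ∣ U_N` and `p ^ e ∣ U_g`, and some `N ≤ m'` works: prime by prime,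
`q ∣ U_q` if `q ∣ k (k + 1)`, and otherwise `q ∣ U_c` with `2c ≤ q + 1`. The latter holds because a
root `α` of `x² - (4k+2) x + 1` in characteristic `q` has `α ^ q ∈ {α, α⁻¹}`, so `α ^ (q ∓ 1) = 1`,
and the discriminant `16 k (k + 1)` is nonzero there. The congruence
`U_{n(t+1)} ≡ (t+1) U_n U_{n+1}^t (mod U_n²)` lifts `p ∣ U_c` to `p ^ e ∣ U_{c p^(e-1)}`, giving
`z(m) ≤ (p + 1) / (2p) · m`. The sharper bounds come from a common factor `2` of the two indices
when `m` is even (`U_n ≡ n (mod 2)`), from `9 ∣ U_2` when `p = 3` and `k ≡ 4 (mod 9)`, and from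
`5 ∣ U_2` when `p = 5` and `k ≡ 2 (mod 5)`. -/

lemma shallitU_succ_succ (k n : ℕ) :
    shallitU k (n + 2) = (4 * k + 2) * shallitU k (n + 1) - shallitU k n := rfl

lemma shallitU_add (k m n : ℕ) :
    shallitU k (m + n) = shallitU k m * shallitU k (n + 1) + shallitU k (m + 1) * shallitU k n
      - (4 * k + 2) * shallitU k m * shallitU k n := by
  induction m using Nat.twoStepInduction with
  | zero => simp [shallitU]
  | one => rw [add_comm]; simp [shallitU]
  | more m ih₁ ih₂ =>
    rw [show m + 2 + n = m + n + 2 by ring, shallitU_succ_succ, show m + n + 1 = m + 1 + n by ring,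
      ih₁, ih₂, shallitU_succ_succ k (m + 1), shallitU_succ_succ k m]
    ring

lemma shallitU_mul_succ_modEq (k n t : ℕ) :
    shallitU k (n * (t + 1)) ≡ (t + 1) * shallitU k n * shallitU k (n + 1) ^ t
      [ZMOD shallitU k n ^ 2] ∧
    shallitU k (n * (t + 1) + 1) ≡ shallitU k (n + 1) ^ (t + 1) [ZMOD shallitU k n ^ 2] := by
  simp only [Int.modEq_iff_dvd]
  induction t with
  | zero => simp
  | succ t ih =>
    obtain ⟨⟨w₁, h₁⟩, ⟨w₂, h₂⟩⟩ := ih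
    set u := shallitU k n
    set C := shallitU k (n + 1)
    set a := n * (t + 1)
    have hrec : shallitU k (a + 1 + 1) = (4 * k + 2) * shallitU k (a + 1) - shallitU k a := rfl
    rw [show n * (t + 1 + 1) = a + n by ring]
    push_cast
    constructor
    · refine ⟨(4 * k + 2) * (t + 1) * C ^ t + (C - (4 * k + 2) * u) * w₁ + u * w₂, ?_⟩
      rw [shallitU_add]
      linear_combination (C - (4 * k + 2) * u) * h₁ + u * h₂
    · refine ⟨C * w₂ + (t + 1) * C ^ t - u * w₁, ?_⟩
      rw [show a + n + 1 = a + 1 + n by ring, shallitU_add, hrec]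
      linear_combination C * h₂ - u * h₁

lemma shallitU_dvd {k a b : ℕ} (h : a ∣ b) : shallitU k a ∣ shallitU k b := by
  obtain ⟨t | t, rfl⟩ := h
  · simp [shallitU]
  · have key := (shallitU_mul_succ_modEq k a t).1
    rw [sq] at key
    exact (key.of_mul_right _).dvd_iff.mpr (dvd_mul_of_dvd_left (dvd_mul_left _ _) _)

lemma pow_succ_dvd_shallitU_mul {k p n j : ℕ} (hj : 1 ≤ j) (h : (p : ℤ) ^ j ∣ shallitU k n) :
    (p : ℤ) ^ (j + 1) ∣ shallitU k (n * p) := by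
  obtain _ | t := p
  · simp [shallitU]
  have hsq : (↑(t + 1) : ℤ) ^ (j + 1) ∣ shallitU k n ^ 2 := by
    refine (pow_dvd_pow _ (by omega : j + 1 ≤ j * 2)).trans ?_
    rw [pow_mul]
    exact pow_dvd_pow_of_dvd h 2
  refine ((shallitU_mul_succ_modEq k n t).1.of_dvd hsq).dvd_iff.mpr ?_
  push_cast at h ⊢
  rw [pow_succ']
  exact dvd_mul_of_dvd_left (mul_dvd_mul_left _ h) _

lemma pow_add_dvd_shallitU_mul_pow {k p n j : ℕ} (hj : 1 ≤ j) (h : (p : ℤ) ^ j ∣ shallitU k n)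
    (i : ℕ) : (p : ℤ) ^ (j + i) ∣ shallitU k (n * p ^ i) := by
  induction i with
  | zero => simpa using h
  | succ i ih =>
    rw [pow_succ, ← mul_assoc, ← add_assoc]
    exact pow_succ_dvd_shallitU_mul (by omega) ih

lemma shallitU_modEq_self {k : ℕ} {q : ℤ} (h : q ∣ 4 * k) (n : ℕ) :
    shallitU k n ≡ n [ZMOD q] := by
  have hP : (4 * k + 2 : ℤ) ≡ 2 [ZMOD q] := (Int.modEq_iff_dvd.mpr (by simpa using h)).symm
  induction n using Nat.twoStepInduction with
  | zero => rfl
  | one => rfl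
  | more n ih₁ ih₂ =>
    rw [shallitU_succ_succ]
    convert (hP.mul ih₂).sub ih₁ using 2
    push_cast
    ring

lemma shallitU_modEq_neg_one_pow {k : ℕ} {q : ℤ} (h : q ∣ 4 * (k + 1)) (n : ℕ) :
    shallitU k n ≡ (-1) ^ (n + 1) * n [ZMOD q] := by
  have hP : (4 * k + 2 : ℤ) ≡ -2 [ZMOD q] :=
    (Int.modEq_iff_dvd.mpr (by ring_nf at h ⊢; simpa [add_comm] using h)).symm
  induction n using Nat.twoStepInduction with
  | zero => simp [shallitU]
  | one => simp [shallitU]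
  | more n ih₁ ih₂ =>
    rw [shallitU_succ_succ]
    convert (hP.mul ih₂).sub ih₁ using 2
    push_cast
    ring

lemma dvd_shallitU_self {k q : ℕ} (h : q ∣ k ∨ q ∣ k + 1) : (q : ℤ) ∣ shallitU k q := by
  rcases h with h | h
  · refine (shallitU_modEq_self (dvd_mul_of_dvd_right ?_ _) q).dvd_iff.mpr dvd_rfl
    exact_mod_cast h
  · refine (shallitU_modEq_neg_one_pow (dvd_mul_of_dvd_right ?_ _) q).dvd_iff.mpr
      (dvd_mul_left _ _)
    exact_mod_cast h

lemma mul_dvd_shallitU_of_coprime {k a b i j N : ℕ} (hab : a.Coprime b)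
    (ha : (a : ℤ) ∣ shallitU k i) (hb : (b : ℤ) ∣ shallitU k j) (hi : i ∣ N) (hj : j ∣ N) :
    ((a * b : ℕ) : ℤ) ∣ shallitU k N := by
  push_cast
  exact (Nat.isCoprime_iff_coprime.mpr hab).mul_dvd (ha.trans (shallitU_dvd hi))
    (hb.trans (shallitU_dvd hj))

lemma two_dvd_shallitU_iff {k n : ℕ} : (2 : ℤ) ∣ shallitU k n ↔ 2 ∣ n := by
  rw [(shallitU_modEq_self (dvd_mul_of_dvd_left (by norm_num) _) n).dvd_iff]
  exact_mod_cast Iff.rfl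

lemma sub_mul_shallitU {R : Type*} [CommRing R] {k : ℕ} {α β : R} (hsum : α + β = 4 * k + 2)
    (hprod : α * β = 1) (n : ℕ) : (α - β) * shallitU k n = α ^ n - β ^ n := by
  induction n using Nat.twoStepInduction with
  | zero => simp [shallitU]
  | one => simp [shallitU]
  | more n ih₁ ih₂ =>
    rw [shallitU_succ_succ]
    push_cast
    linear_combination (4 * (k : R) + 2) * ih₂ - ih₁ - (α ^ (n + 1) - β ^ (n + 1)) * hsum
      + (α ^ n - β ^ n) * hprod

lemma dvd_shallitU_of_pow_eq_one {K : Type*} [Field K] {p k c : ℕ} [CharP K p] {α β : K}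
    (hsum : α + β = 4 * k + 2) (hprod : α * β = 1) (hne : α ≠ β) (hc : α ^ (2 * c) = 1) :
    (p : ℤ) ∣ shallitU k c := by
  have hαc : α ^ c ≠ 0 := pow_ne_zero _ (left_ne_zero_of_mul_eq_one hprod)
  have hpow : α ^ c * (α ^ c - β ^ c) = 0 := by
    rw [mul_sub, ← pow_add, ← mul_pow, hprod, one_pow, ← two_mul, hc, sub_self]
  have hU := sub_mul_shallitU hsum hprod c
  rw [eq_of_sub_eq_zero ((mul_eq_zero.mp hpow).resolve_left hαc), sub_self] at hU
  exact (CharP.intCast_eq_zero_iff K p _).mp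
    ((mul_eq_zero.mp hU).resolve_left (sub_ne_zero.mpr hne))

lemma ne_two_of_not_dvd_mul_succ {k p : ℕ} (h : ¬ p ∣ k * (k + 1)) : p ≠ 2 := by
  rintro rfl
  exact h (even_iff_two_dvd.mp (Nat.even_mul_succ_self k))

lemma prime_dvd_shallitU_half_of_root {K : Type*} [Field K] {k p : ℕ} [hp : Fact p.Prime]
    [CharP K p] (h : ¬ p ∣ k * (k + 1)) {α : K} (hα : α ^ 2 - (4 * k + 2) * α + 1 = 0) :
    (p : ℤ) ∣ shallitU k ((p - 1) / 2) ∨ (p : ℤ) ∣ shallitU k ((p + 1) / 2) := by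
  have hp2 := ne_two_of_not_dvd_mul_succ h
  have hodd := hp.out.mod_two_eq_one_iff_ne_two.mpr hp2
  set β : K := 4 * k + 2 - α
  have hsum : α + β = 4 * k + 2 := by ring
  have hprod : α * β = 1 := by linear_combination -hα
  have hne : α ≠ β := by
    have hdisc : (α - β) ^ 2 = ((16 * (k * (k + 1)) : ℕ) : K) := by
      push_cast
      linear_combination (α + β + 4 * k + 2) * hsum - 4 * hprod
    have hcop : Nat.Coprime p 16 :=
      ((Nat.coprime_primes hp.out Nat.prime_two).mpr hp2).pow_right 4
    intro hαβ
    rw [hαβ, sub_self, zero_pow two_ne_zero, eq_comm, CharP.cast_eq_zero_iff K p] at hdisc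
    exact h (hcop.dvd_of_dvd_mul_left hdisc)
  have hfrob : (α ^ p - α) * (α ^ p - β) = 0 := by
    have := congrArg (frobenius K p) hα
    simp only [map_add, map_sub, map_mul, map_pow, map_one, map_zero, map_natCast, map_ofNat]
      at this
    simp only [frobenius_def] at this
    linear_combination this - α ^ p * hsum + hprod
  have hα0 : α ≠ 0 := left_ne_zero_of_mul_eq_one hprod
  rcases mul_eq_zero.mp hfrob with hfix | hswap
  · refine .inl (dvd_shallitU_of_pow_eq_one hsum hprod hne ?_)
    rw [show 2 * ((p - 1) / 2) = p - 1 by omega]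
    refine mul_right_cancel₀ hα0 ?_
    rw [← pow_succ, Nat.sub_add_cancel hp.out.one_le, one_mul, sub_eq_zero.mp hfix]
  · refine .inr (dvd_shallitU_of_pow_eq_one hsum hprod hne ?_)
    rw [show 2 * ((p + 1) / 2) = p + 1 by omega, pow_succ, sub_eq_zero.mp hswap, mul_comm, hprod]

open Polynomial in
lemma prime_dvd_shallitU_half {k p : ℕ} (hp : p.Prime) (h : ¬ p ∣ k * (k + 1)) :
    (p : ℤ) ∣ shallitU k ((p - 1) / 2) ∨ (p : ℤ) ∣ shallitU k ((p + 1) / 2) := by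
  have := Fact.mk hp
  obtain ⟨α, hα⟩ := IsAlgClosed.exists_root
    (C 1 * X ^ 2 + C (-(4 * k + 2) : AlgebraicClosure (ZMod p)) * X + C 1)
    (by rw [degree_quadratic one_ne_zero]; decide)
  simp only [IsRoot, eval_add, eval_mul, eval_C, eval_pow, eval_X] at hα
  exact prime_dvd_shallitU_half_of_root h (α := α) (by linear_combination hα)

lemma pow_succ_dvd_shallitU_mul_pow {k p c : ℕ} (h : (p : ℤ) ∣ shallitU k c) (f : ℕ) :
    (p : ℤ) ^ (f + 1) ∣ shallitU k (c * p ^ f) :=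
  add_comm 1 f ▸ pow_add_dvd_shallitU_mul_pow le_rfl (by simpa using h) f

lemma exists_dvd_shallitU_of_not_dvd {k p : ℕ} (hp : p.Prime) (h : ¬ p ∣ k * (k + 1)) :
    ∃ c, 0 < c ∧ 2 * c ≤ p + 1 ∧ (p : ℤ) ∣ shallitU k c := by
  have hodd := hp.mod_two_eq_one_iff_ne_two.mpr (ne_two_of_not_dvd_mul_succ h)
  have hp3 : 3 ≤ p := by have := hp.two_le; omega
  rcases prime_dvd_shallitU_half hp h with hc | hc
  · exact ⟨(p - 1) / 2, by omega, by omega, hc⟩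
  · exact ⟨(p + 1) / 2, by omega, by omega, hc⟩

lemma pow_dvd_shallitU_pow {k p : ℕ} (h : p ∣ k ∨ p ∣ k + 1) (f : ℕ) :
    (p : ℤ) ^ f ∣ shallitU k (p ^ f) := by
  obtain _ | f := f
  · simp [shallitU]
  · simpa [pow_succ'] using pow_succ_dvd_shallitU_mul_pow (dvd_shallitU_self h) f

lemma exists_pos_le_dvd_shallitU (k : ℕ) {m : ℕ} (hm : 0 < m) :
    ∃ N, 0 < N ∧ N ≤ m ∧ (m : ℤ) ∣ shallitU k N := by
  induction m using Nat.recOnPosPrimePosCoprime with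
  | zero => omega
  | one => exact ⟨1, one_pos, le_rfl, by simp⟩
  | prime_pow q f hq hf =>
    by_cases hqk : q ∣ k * (k + 1)
    · exact ⟨q ^ f, hm, le_rfl, by simpa using pow_dvd_shallitU_pow (hq.dvd_mul.mp hqk) f⟩
    · obtain ⟨c, hc, hcq, hdvd⟩ := exists_dvd_shallitU_of_not_dvd hq hqk
      obtain ⟨g, rfl⟩ : ∃ g, f = g + 1 := ⟨f - 1, by omega⟩
      refine ⟨c * q ^ g, Nat.mul_pos hc (pow_pos hq.pos g), ?_,
        by simpa using pow_succ_dvd_shallitU_mul_pow hdvd g⟩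
      rw [pow_succ']
      exact Nat.mul_le_mul_right _ (by omega)
  | coprime a b _ _ hab iha ihb =>
    obtain ⟨Na, hNa, hNam, ha⟩ := iha (Nat.pos_of_mul_pos_right hm)
    obtain ⟨Nb, hNb, hNbm, hb⟩ := ihb (Nat.pos_of_mul_pos_left hm)
    exact ⟨Na * Nb, by positivity, Nat.mul_le_mul hNam hNbm,
      mul_dvd_shallitU_of_coprime hab ha hb (dvd_mul_right _ _) (dvd_mul_left _ _)⟩

lemma shallitZ_le {k m N : ℕ} (hN : 0 < N) (h : (m : ℤ) ∣ shallitU k N) : shallitZ k m ≤ N :=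
  Nat.sInf_le ⟨hN, h⟩

lemma shallitZ_mul_mul_gcd_le {k a b i j : ℕ} (hab : a.Coprime b) (hi : 0 < i) (hj : 0 < j)
    (ha : (a : ℤ) ∣ shallitU k i) (hb : (b : ℤ) ∣ shallitU k j) :
    shallitZ k (a * b) * i.gcd j ≤ i * j := by
  have hz : shallitZ k (a * b) ≤ i.lcm j := shallitZ_le (Nat.lcm_pos hi hj)
    (mul_dvd_shallitU_of_coprime hab ha hb (Nat.dvd_lcm_left i j) (Nat.dvd_lcm_right i j))
  calc shallitZ k (a * b) * i.gcd j ≤ i.lcm j * i.gcd j := Nat.mul_le_mul_right _ hz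
    _ = i * j := by rw [mul_comm, Nat.gcd_mul_lcm]

lemma mul_shallitZ_le {k a m g r s : ℕ} (ham : a.Coprime m) (hm : 0 < m) (hg : 0 < g)
    (ha : (a : ℤ) ∣ shallitU k g) (hrs : r * g ≤ s * a) :
    r * shallitZ k (a * m) ≤ s * (a * m) := by
  obtain ⟨L, hL, hLm, hmL⟩ := exists_pos_le_dvd_shallitU k hm
  have hz := shallitZ_mul_mul_gcd_le ham hg hL ha hmL
  calc r * shallitZ k (a * m) ≤ r * (shallitZ k (a * m) * g.gcd L) :=
        Nat.mul_le_mul_left _ (Nat.le_mul_of_pos_right _ (Nat.gcd_pos_of_pos_left _ hg))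
    _ ≤ r * (g * L) := Nat.mul_le_mul_left _ hz
    _ = r * g * L := by ring
    _ ≤ s * a * m := Nat.mul_le_mul hrs hLm
    _ = s * (a * m) := by ring

lemma mul_shallitZ_le_of_even {k a m g r s : ℕ} (ham : a.Coprime m) (hm : 0 < m) (hg : 0 < g)
    (ha : (a : ℤ) ∣ shallitU k g) (hm2 : 2 ∣ m) (hg2 : 2 ∣ g) (hrs : r * g ≤ 2 * s * a) :
    r * shallitZ k (a * m) ≤ s * (a * m) := by
  obtain ⟨L, hL, hLm, hmL⟩ := exists_pos_le_dvd_shallitU k hm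
  have hz := shallitZ_mul_mul_gcd_le ham hg hL ha hmL
  have hL2 : 2 ∣ L := two_dvd_shallitU_iff.mp ((Int.natCast_dvd_natCast.mpr hm2).trans hmL)
  have hgcd : 2 ≤ g.gcd L := Nat.le_of_dvd (Nat.gcd_pos_of_pos_left _ hg) (Nat.dvd_gcd hg2 hL2)
  refine Nat.le_of_mul_le_mul_left ?_ two_pos
  calc 2 * (r * shallitZ k (a * m)) ≤ r * (shallitZ k (a * m) * g.gcd L) := by
        rw [mul_left_comm, mul_comm (shallitZ k _)]
        exact Nat.mul_le_mul_left _ (Nat.mul_le_mul_right _ hgcd)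
    _ ≤ r * (g * L) := Nat.mul_le_mul_left _ hz
    _ = r * g * L := by ring
    _ ≤ 2 * s * a * m := Nat.mul_le_mul hrs hLm
    _ = 2 * (s * (a * m)) := by ring

lemma mul_mul_pow_le_mul_pow_succ {r s c p f : ℕ} (h : r * c ≤ s * p) :
    r * (c * p ^ f) ≤ s * p ^ (f + 1) :=
  calc r * (c * p ^ f) = r * c * p ^ f := by ring
    _ ≤ s * p * p ^ f := Nat.mul_le_mul_right _ h
    _ = s * p ^ (f + 1) := by ring

lemma two_dvd_of_even_pow_mul {p e m : ℕ} (hp : p.Prime) (hp2 : p ≠ 2) (h : Even (p ^ e * m)) :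
    2 ∣ m :=
  (Nat.prime_two.dvd_mul.mp (even_iff_two_dvd.mp h)).resolve_left fun h2 =>
    hp2 ((Nat.prime_dvd_prime_iff_eq Nat.prime_two hp).mp (Nat.prime_two.dvd_of_dvd_pow h2)).symm

lemma mul_shallitZ_le_of_dvd_shallitU {k p f m c r s : ℕ} (hp : p.Prime) (hpm : ¬ p ∣ m)
    (hm : 0 < m) (hc : 0 < c) (hpc : (p : ℤ) ∣ shallitU k c) (hrs : r * c ≤ s * p) :
    r * shallitZ k (p ^ (f + 2) * m) ≤ s * (p ^ (f + 2) * m) :=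
  mul_shallitZ_le ((hp.coprime_iff_not_dvd.mpr hpm).pow_left _) hm
    (Nat.mul_pos hc (pow_pos hp.pos _)) (by simpa using pow_succ_dvd_shallitU_mul_pow hpc (f + 1))
    (mul_mul_pow_le_mul_pow_succ hrs)

lemma mul_shallitZ_le_of_even_of_dvd_shallitU {k p f m c r s : ℕ} (hp : p.Prime) (hp2 : p ≠ 2)
    (hpm : ¬ p ∣ m) (hm : 0 < m) (hev : Even (p ^ (f + 2) * m)) (hc : 0 < c) (hc2 : 2 ∣ c)
    (hpc : (p : ℤ) ∣ shallitU k c) (hrs : r * c ≤ 2 * s * p) :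
    r * shallitZ k (p ^ (f + 2) * m) ≤ s * (p ^ (f + 2) * m) :=
  mul_shallitZ_le_of_even ((hp.coprime_iff_not_dvd.mpr hpm).pow_left _) hm
    (Nat.mul_pos hc (pow_pos hp.pos _)) (by simpa using pow_succ_dvd_shallitU_mul_pow hpc (f + 1))
    (two_dvd_of_even_pow_mul hp hp2 hev) (dvd_mul_of_dvd_left hc2 _)
    (mul_mul_pow_le_mul_pow_succ hrs)

lemma three_mul_shallitZ_le {k p f m : ℕ} (hp : p.Prime) (hpk : ¬ p ∣ k * (k + 1))
    (hpm : ¬ p ∣ m) (hm : 0 < m) :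
    3 * shallitZ k (p ^ (f + 2) * m) ≤ 2 * (p ^ (f + 2) * m) := by
  have hp2 := ne_two_of_not_dvd_mul_succ hpk
  have := hp.two_le
  obtain ⟨c, hc, hcp, hpc⟩ := exists_dvd_shallitU_of_not_dvd hp hpk
  exact mul_shallitZ_le_of_dvd_shallitU hp hpm hm hc hpc (by omega)

lemma five_mul_shallitZ_le {k p f m : ℕ} (hp : p.Prime) (hpk : ¬ p ∣ k * (k + 1))
    (hpm : ¬ p ∣ m) (hm : 0 < m) (hk1 : k % 9 ≠ 1) (hk7 : k % 9 ≠ 7) :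
    5 * shallitZ k (p ^ (f + 2) * m) ≤ 3 * (p ^ (f + 2) * m) := by
  have hodd := hp.mod_two_eq_one_iff_ne_two.mpr (ne_two_of_not_dvd_mul_succ hpk)
  have := hp.two_le
  rcases eq_or_ne p 3 with rfl | hp3
  · have hk : ¬ 3 ∣ k ∧ ¬ 3 ∣ k + 1 :=
      ⟨fun h => hpk (dvd_mul_of_dvd_left h _), fun h => hpk (dvd_mul_of_dvd_right h _)⟩
    have hk9 : k % 9 = 4 := by omega
    have h9 : (3 : ℤ) ^ 2 ∣ shallitU k 2 := ⟨4 * (k / 9 : ℕ) + 2, by simp [shallitU]; omega⟩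
    refine mul_shallitZ_le ((hp.coprime_iff_not_dvd.mpr hpm).pow_left _) hm
      (g := 2 * 3 ^ f) (by positivity) ?_ ?_
    · simpa [add_comm 2] using pow_add_dvd_shallitU_mul_pow (by norm_num) h9 f
    · rw [pow_add]
      omega
  · obtain ⟨c, hc, hcp, hpc⟩ := exists_dvd_shallitU_of_not_dvd hp hpk
    exact mul_shallitZ_le_of_dvd_shallitU hp hpm hm hc hpc (by omega)

lemma five_mul_shallitZ_le_of_even {k p f m : ℕ} (hp : p.Prime) (hpk : ¬ p ∣ k * (k + 1))
    (hpm : ¬ p ∣ m) (hm : 0 < m) (hev : Even (p ^ (f + 2) * m)) :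
    5 * shallitZ k (p ^ (f + 2) * m) ≤ 3 * (p ^ (f + 2) * m) := by
  have hp2 := ne_two_of_not_dvd_mul_succ hpk
  have hodd := hp.mod_two_eq_one_iff_ne_two.mpr hp2
  have := hp.two_le
  obtain ⟨c, hc, hcp, hpc⟩ := exists_dvd_shallitU_of_not_dvd hp hpk
  rcases Nat.even_or_odd' c with ⟨c₀, rfl | rfl⟩
  · exact mul_shallitZ_le_of_even_of_dvd_shallitU hp hp2 hpm hm hev hc (dvd_mul_right 2 c₀) hpc
      (by omega)
  · exact mul_shallitZ_le_of_dvd_shallitU hp hpm hm hc hpc (by omega)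

lemma thirteen_mul_shallitZ_le_of_even {k p f m : ℕ} (hp : p.Prime) (hpk : ¬ p ∣ k * (k + 1))
    (hpm : ¬ p ∣ m) (hm : 0 < m) (hev : Even (p ^ (f + 2) * m))
    (hk5 : k % 5 = 0 ∨ k % 5 = 2 ∨ k % 5 = 4) :
    13 * shallitZ k (p ^ (f + 2) * m) ≤ 7 * (p ^ (f + 2) * m) := by
  have hp2 := ne_two_of_not_dvd_mul_succ hpk
  have hodd := hp.mod_two_eq_one_iff_ne_two.mpr hp2
  have := hp.two_le
  rcases eq_or_ne p 5 with rfl | hp5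
  · have hk : ¬ 5 ∣ k ∧ ¬ 5 ∣ k + 1 :=
      ⟨fun h => hpk (dvd_mul_of_dvd_left h _), fun h => hpk (dvd_mul_of_dvd_right h _)⟩
    have hk2 : k % 5 = 2 := by omega
    have h5 : (5 : ℤ) ∣ shallitU k 2 := ⟨4 * (k / 5 : ℕ) + 2, by simp [shallitU]; omega⟩
    exact mul_shallitZ_le_of_even_of_dvd_shallitU hp hp2 hpm hm hev two_pos dvd_rfl h5
      (by norm_num)
  · have hp9 : p ≠ 9 := by rintro rfl; norm_num at hp
    obtain ⟨c, hc, hcp, hpc⟩ := exists_dvd_shallitU_of_not_dvd hp hpk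
    rcases Nat.even_or_odd' c with ⟨c₀, rfl | rfl⟩
    · exact mul_shallitZ_le_of_even_of_dvd_shallitU hp hp2 hpm hm hev hc (dvd_mul_right 2 c₀) hpc
        (by omega)
    · exact mul_shallitZ_le_of_dvd_shallitU hp hpm hm hc hpc (by omega)

lemma exists_eq_pow_add_two_mul_of_sq_dvd {p m : ℕ} (hp : p.Prime) (hm : m ≠ 0)
    (h : p ^ 2 ∣ m) : ∃ f m', ¬ p ∣ m' ∧ m = p ^ (f + 2) * m' := by
  obtain ⟨e, m', hpm, rfl⟩ := Nat.exists_eq_pow_mul_and_not_dvd hm p hp.one_lt.ne'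
  have he : 2 ≤ e := (Nat.pow_dvd_pow_iff_le_right hp.one_lt).mp
    ((Nat.Coprime.pow_left 2 (hp.coprime_iff_not_dvd.mpr hpm)).dvd_of_dvd_mul_right h)
  exact ⟨e - 2, m', hpm, by rw [Nat.sub_add_cancel he]⟩

theorem stmt15_general (k : ℕ) (m : ℕ) (hm : 1 ≤ m)
    (hp : ∃ p : ℕ, p.Prime ∧ ¬ p ∣ k * (k + 1) ∧ p ^ 2 ∣ m) :
    3 * shallitZ k m ≤ 2 * m ∧
    (k % 9 ≠ 1 → k % 9 ≠ 7 → 5 * shallitZ k m ≤ 3 * m) ∧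
    (Even m → 5 * shallitZ k m ≤ 3 * m) ∧
    (Even m → (k % 5 = 0 ∨ k % 5 = 2 ∨ k % 5 = 4) → 13 * shallitZ k m ≤ 7 * m) := by
  obtain ⟨p, hp, hpk, hp2m⟩ := hp
  obtain ⟨f, m', hpm, rfl⟩ := exists_eq_pow_add_two_mul_of_sq_dvd hp (by omega) hp2m
  have hm' : 0 < m' := Nat.pos_of_mul_pos_left hm
  exact ⟨three_mul_shallitZ_le hp hpk hpm hm', five_mul_shallitZ_le hp hpk hpm hm',
    five_mul_shallitZ_le_of_even hp hpk hpm hm', thirteen_mul_shallitZ_le_of_even hp hpk hpm hm'⟩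

theorem stmt15 (k : ℕ) (hk : 1 ≤ k) (m : ℕ) (hm : 1 ≤ m)
    (hp : ∃ p : ℕ, p.Prime ∧ ¬ p ∣ k * (k + 1) ∧ p ^ 2 ∣ m) :
    3 * shallitZ k m ≤ 2 * m ∧
    (k % 9 ≠ 1 → k % 9 ≠ 7 → 5 * shallitZ k m ≤ 3 * m) ∧
    (Even m → 5 * shallitZ k m ≤ 3 * m) ∧
    (Even m → (k % 5 = 0 ∨ k % 5 = 2 ∨ k % 5 = 4) → 13 * shallitZ k m ≤ 7 * m) :=
  stmt15_general k m hm hp
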